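/- arXiv:1707.02257 — 2 statements merged into one kernel-verified Lean document; each statement's English description precedes it below -/
import Mathlib

section
/- Let K be a number field. Then the set of c ∈ K for which G(f_c,K) is not strongly admissible is finite. Explicitly, the set of c ∈ K such that [some β ∈ PrePer(f_c,K) has exactly one preimage α ∈ K with α² + c = β, or for some N ≥ 2 the number of α ∈ K of exact period N under f_c exceeds D(N), or the number of fixed points of f_c in K is exactly 1] is a finite subset of K. -/
/-!
A point `β` with a unique preimage `α` under `z ↦ z² + c` has `α = -α`, so `α = 0` and `β = c`.
Then the critical value `c` is preperiodic, hence an algebraic integer (a root of the monic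
`f_X^n(X) - f_X^m(X) ∈ ℤ[X]`) all of whose conjugates have absolute value at most `2` (beyond `2`
the critical orbit escapes to infinity), and a number field has only finitely many such elements.
A unique fixed point forces the two fixed points `α` and `1 - α` to coincide, so `c = 1/4`.

The bound on points of exact period `N` holds for every `c`, and for every polynomial of degree
`d ≥ 2` over a field of characteristic `0`. Over an algebraic closure, let `v_n(α)` be the
multiplicity of `α` as a root of `f^n(z) - z`, so that `∑_α v_n(α) = d^n`. Let `α` have exact
period `m` and multiplier `λ = (f^m)'(α)` of order `r`. For `m ∣ n`, `α` is a simple root of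
`f^n(z) - z` unless `λ^(n/m) = 1`; and in characteristic `0` iterating a map with a fixed point of
multiplier `1` does not change its multiplicity. Hence `v_n(α) = [m ∣ n] + t [m r ∣ n]` with
`t ≥ 0`, and Möbius inversion of `∑_α v_n(α) = d^n` writes `D(N)` as a sum of nonnegative
contributions `[m = N] + t [m r = N]`, each point of exact period `N` contributing at least `1`.
-/

noncomputable section

def DD (N : ℕ) : ℤ := ∑ n ∈ N.divisors, ArithmeticFunction.moebius (N / n) * 2 ^ n

open Polynomial Function
open scoped ArithmeticFunction.Moebius

theorem sum_divisors_moebius_mul_ite_dvd {N : ℕ} (hN : 0 < N) (d : ℕ) :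
    ∑ n ∈ N.divisors, (μ (N / n) : ℤ) * (if d ∣ n then 1 else 0) = if d = N then 1 else 0 := by
  have hinv := (ArithmeticFunction.sum_eq_iff_sum_mul_moebius_eq (R := ℤ)
    (f := fun k => if d = k then 1 else 0) (g := fun n => if d ∣ n then 1 else 0)).1
    (fun n hn => by simp [Finset.sum_ite_eq, hn.ne']) N hN
  simp only [Int.cast_id] at hinv
  rwa [Nat.sum_divisorsAntidiagonal' (fun a b => μ a * if d ∣ b then 1 else 0)] at hinv

theorem minimalPeriod_eq_iff_of_pos {α : Type*} {f : α → α} {x : α} {N : ℕ} (hN : 0 < N) :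
    minimalPeriod f x = N ↔ f^[N] x = x ∧ ∀ k, 0 < k → k < N → f^[k] x ≠ x := by
  refine ⟨fun h => ⟨h ▸ isPeriodicPt_minimalPeriod f x, fun k hk hkN =>
    not_isPeriodicPt_of_pos_of_lt_minimalPeriod hk.ne' (h ▸ hkN)⟩, fun ⟨hper, hmin⟩ => ?_⟩
  have hle : minimalPeriod f x ≤ N := IsPeriodicPt.minimalPeriod_le hN hper
  have hpos : 0 < minimalPeriod f x := IsPeriodicPt.minimalPeriod_pos hN hper
  by_contra hne
  exact hmin _ hpos (lt_of_le_of_ne hle hne) (isPeriodicPt_minimalPeriod f x)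

theorem minimalPeriod_apply_eq_of_semiconj {α β : Type*} {fa : α → α} {fb : β → β} {g : α → β}
    (hg : Injective g) (h : Semiconj g fa fb) (x : α) :
    minimalPeriod fb (g x) = minimalPeriod fa x :=
  minimalPeriod_eq_minimalPeriod_iff.2 fun n => by
    simp only [IsPeriodicPt, IsFixedPt, ← h.iterate_right n x, hg.eq_iff]

theorem semiconj_sq_add {R S F : Type*} [Semiring R] [Semiring S] [FunLike F R S]
    [RingHomClass F R S] (φ : F) (a : R) :
    Semiconj φ (fun z => z ^ 2 + a) (fun z => z ^ 2 + φ a) := fun z => by simp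

theorem eq_of_encard_preimage_sq_add_eq_one {K : Type*} [Field K] [NeZero (2 : K)] {c β : K}
    (h : {α : K | α ^ 2 + c = β}.encard = 1) : β = c := by
  obtain ⟨a, ha⟩ := Set.encard_eq_one.mp h
  have ha' : a ^ 2 + c = β := ha.symm.subset rfl
  have hneg : (-a) ^ 2 + c = β := by rw [neg_sq, ha']
  have ha0 : a = 0 := by
    have : 2 * a = 0 := by linear_combination -(Set.mem_singleton_iff.mp (ha.subset hneg))
    exact (mul_eq_zero.mp this).resolve_left two_ne_zero
  simp [← ha', ha0]

theorem eq_one_div_four_of_encard_fixedPoints_sq_add_eq_one {K : Type*} [Field K]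
    [NeZero (2 : K)] {c : K} (h : {α : K | α ^ 2 + c = α}.encard = 1) : c = 1 / 4 := by
  obtain ⟨a, ha⟩ := Set.encard_eq_one.mp h
  have ha' : a ^ 2 + c = a := ha.symm.subset rfl
  have hsym : (1 - a) ^ 2 + c = 1 - a := by linear_combination ha'
  have h2a : 2 * a = 1 := by linear_combination -(Set.mem_singleton_iff.mp (ha.subset hsym))
  have h4 : (4 : K) ≠ 0 := by
    rw [show (4 : K) = 2 * 2 by norm_num]
    exact mul_ne_zero two_ne_zero two_ne_zero
  rw [eq_div_iff h4]
  linear_combination 4 * ha' + (1 - 2 * a) * h2a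

def critOrbitPoly (n : ℕ) : ℤ[X] := (fun z => z ^ 2 + X)^[n] X

theorem aeval_critOrbitPoly {K : Type*} [CommRing K] (c : K) (n : ℕ) :
    aeval c (critOrbitPoly n) = (fun z => z ^ 2 + c)^[n] c := by
  rw [critOrbitPoly, (semiconj_sq_add (aeval c) X).iterate_right n X, aeval_X]

theorem monic_and_natDegree_critOrbitPoly (n : ℕ) :
    (critOrbitPoly n).Monic ∧ (critOrbitPoly n).natDegree = 2 ^ n := by
  induction n with
  | zero => exact ⟨monic_X, by simp [critOrbitPoly]⟩
  | succ n ih =>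
    obtain ⟨hmon, hdeg⟩ := ih
    have hlt : (X : ℤ[X]).natDegree < (critOrbitPoly n ^ 2).natDegree := by
      rw [hmon.natDegree_pow, hdeg, natDegree_X]
      have := Nat.one_le_two_pow (n := n)
      omega
    rw [critOrbitPoly, iterate_succ_apply', ← critOrbitPoly]
    refine ⟨(hmon.pow 2).add_of_left (degree_lt_degree hlt), ?_⟩
    rw [natDegree_add_eq_left_of_natDegree_lt hlt, hmon.natDegree_pow, hdeg, pow_succ, mul_comm]

theorem isIntegral_of_iterate_eq {K : Type*} [CommRing K] {c : K} {m n : ℕ} (hmn : m < n)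
    (h : (fun z => z ^ 2 + c)^[m] c = (fun z => z ^ 2 + c)^[n] c) : IsIntegral ℤ c := by
  obtain ⟨hmon, hdegn⟩ := monic_and_natDegree_critOrbitPoly n
  have hdeg : (critOrbitPoly m).degree < (critOrbitPoly n).degree := by
    refine degree_lt_degree ?_
    rw [hdegn, (monic_and_natDegree_critOrbitPoly m).2]
    exact Nat.pow_lt_pow_right (by norm_num) hmn
  refine ⟨_, hmon.sub_of_left hdeg, ?_⟩
  rw [← aeval_def, map_sub, aeval_critOrbitPoly, aeval_critOrbitPoly, h, sub_self]

theorem norm_le_two_of_iterate_eq {𝕜 : Type*} [NormedField 𝕜] {c : 𝕜} {m n : ℕ} (hmn : m < n)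
    (h : (fun z => z ^ 2 + c)^[m] c = (fun z => z ^ 2 + c)^[n] c) : ‖c‖ ≤ 2 := by
  by_contra! hc
  set f : 𝕜 → 𝕜 := fun z => z ^ 2 + c
  have hgrow : ∀ z, ‖c‖ ≤ ‖z‖ → ‖z‖ < ‖f z‖ := fun z hz => by
    have := norm_le_add_norm_add (z ^ 2) c
    rw [norm_pow] at this
    show ‖z‖ < ‖z ^ 2 + c‖
    nlinarith
  have hge : ∀ k, ‖c‖ ≤ ‖f^[k] c‖ := fun k => by
    induction k with
    | zero => rfl
    | succ k ih => rw [iterate_succ_apply']; exact ih.trans (hgrow _ ih).le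
  have hmono : StrictMono fun k => ‖f^[k] c‖ :=
    strictMono_nat_of_lt_succ fun k => by rw [iterate_succ_apply']; exact hgrow _ (hge k)
  exact hmn.ne (hmono.injective (congrArg norm h))

theorem finite_setOf_iterate_eq (K : Type*) [Field K] [NumberField K] :
    {c : K | ∃ m n : ℕ, m < n ∧
      (fun z => z ^ 2 + c)^[m] c = (fun z => z ^ 2 + c)^[n] c}.Finite := by
  refine (NumberField.Embeddings.finite_of_norm_le K ℂ 2).subset ?_
  rintro c ⟨m, n, hmn, h⟩
  refine ⟨isIntegral_of_iterate_eq hmn h, fun φ => norm_le_two_of_iterate_eq hmn ?_⟩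
  have hφ := (semiconj_sq_add φ c).iterate_right
  rw [← hφ m c, ← hφ n c, h]

namespace Polynomial

section Iterates

variable {R : Type*} [CommSemiring R]

theorem iterate_comp_X_comp (p q : R[X]) (m : ℕ) : (p.comp^[m] X).comp q = p.comp^[m] q := by
  induction m with
  | zero => simp
  | succ m ih => rw [iterate_succ_apply', iterate_succ_apply', Polynomial.comp_assoc, ih]

theorem iterate_comp_X_mul (p : R[X]) (m k : ℕ) :
    p.comp^[m * k] X = (p.comp^[m] X).comp^[k] X := by
  rw [iterate_mul]
  congr 1
  funext q
  exact (iterate_comp_X_comp p q m).symm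

theorem eval_derivative_iterate_comp_X {p : R[X]} {α : R} (hα : p.eval α = α) (k : ℕ) :
    (derivative (p.comp^[k] X)).eval α = (derivative p).eval α ^ k := by
  induction k with
  | zero => simp
  | succ k ih =>
    rw [iterate_succ_apply', derivative_comp, eval_mul, eval_comp, iterate_comp_eval, eval_X,
      iterate_fixed (f := fun x => p.eval x) hα, ih, pow_succ]

end Iterates

theorem isRoot_iterate_comp_X_sub_X_iff {R : Type*} [CommRing R] {p : R[X]} {n : ℕ} {α : R} :
    (p.comp^[n] X - X).IsRoot α ↔ IsPeriodicPt (fun x => p.eval x) n α := by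
  simp [IsPeriodicPt, IsFixedPt, sub_eq_zero]

variable {L : Type*} [Field L]

theorem natDegree_iterate_comp_X_sub_X {p : L[X]} (hp : 2 ≤ p.natDegree) {n : ℕ} (hn : n ≠ 0) :
    (p.comp^[n] X - X).natDegree = p.natDegree ^ n := by
  have hlt : (X : L[X]).natDegree < (p.comp^[n] X).natDegree := by
    rw [natDegree_iterate_comp, natDegree_X, mul_one]
    exact one_lt_pow₀ (by omega) hn
  rw [natDegree_sub_eq_left_of_natDegree_lt hlt, natDegree_iterate_comp, natDegree_X, mul_one]

theorem iterate_comp_X_sub_X_ne_zero {p : L[X]} (hp : 2 ≤ p.natDegree) {n : ℕ} (hn : n ≠ 0) :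
    p.comp^[n] X - X ≠ 0 := fun h => by
  have := natDegree_iterate_comp_X_sub_X hp hn
  rw [h, natDegree_zero] at this
  exact pow_ne_zero n (by omega : p.natDegree ≠ 0) this.symm

theorem rootMultiplicity_sub_X_eq_one {p : L[X]} {α : L} (hα : p.eval α = α)
    (hd : (derivative p).eval α ≠ 1) : rootMultiplicity α (p - X) = 1 := by
  have hne : p - X ≠ 0 := fun h => hd (by simp [sub_eq_zero.mp h])
  have hpos := (rootMultiplicity_pos hne).mpr (show (p - X).IsRoot α by simp [hα])
  have hle : ¬ 1 < rootMultiplicity α (p - X) := by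
    rw [one_lt_rootMultiplicity_iff_isRoot hne]
    rintro ⟨-, h⟩
    exact hd (by simpa [sub_eq_zero] using h)
  omega

theorem rootMultiplicity_iterate_comp_X_sub_X [CharZero L] {p : L[X]} {α : L}
    (hα : p.eval α = α) (hd : (derivative p).eval α = 1) {k : ℕ} (hk : k ≠ 0) :
    rootMultiplicity α (p.comp^[k] X - X) = rootMultiplicity α (p - X) := by
  by_cases hne : p - X = 0
  · rw [sub_eq_zero.mp hne, iterate_fixed (X_comp (p := X)), sub_self]
  obtain ⟨u, hpu, hu⟩ := (p - X).exists_eq_pow_rootMultiplicity_mul_and_not_dvd hne α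
  rw [dvd_iff_isRoot] at hu
  set s := rootMultiplicity α (p - X)
  have hs : 1 < s := (one_lt_rootMultiplicity_iff_isRoot hne).mpr
    ⟨by simp [hα], by simp [hd]⟩
  -- To order `s` at `α`, the `k`-th iterate is `X + k u(α) (X - α)^s`.
  have key : ∀ k : ℕ, ∃ w : L[X], p.comp^[k] X - X = (X - C α) ^ s * w ∧
      w.eval α = k * u.eval α := by
    intro k
    induction k with
    | zero => exact ⟨0, by simp, by simp⟩
    | succ k ih =>
      obtain ⟨w, hw, hwα⟩ := ih
      set q := p.comp^[k] X
      have hpow : (X - C α) ^ s = (X - C α) * (X - C α) ^ (s - 1) := by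
        rw [← pow_succ', Nat.sub_add_cancel hs.le]
      have hq : q - C α = (X - C α) * ((X - C α) ^ (s - 1) * w + 1) := by
        linear_combination hw + w * hpow
      refine ⟨((X - C α) ^ (s - 1) * w + 1) ^ s * u.comp q + w, ?_, ?_⟩
      · have hsplit : p.comp^[k + 1] X - X = (p - X).comp q + (q - X) := by
          rw [iterate_succ_apply', sub_comp, X_comp]; ring
        rw [hsplit, hpu, mul_comp, pow_comp, sub_comp, X_comp, C_comp, hq, mul_pow, hw]
        ring
      · have hqα : q.eval α = α := by simp [q, iterate_fixed (f := fun x => p.eval x) hα]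
        simp only [eval_add, eval_mul, eval_pow, eval_sub, eval_X, eval_C, sub_self,
          zero_pow (Nat.sub_ne_zero_of_lt hs), eval_one, eval_comp, hqα, hwα]
        push_cast
        ring
  obtain ⟨w, hw, hwα⟩ := key k
  have hw0 : w.eval α ≠ 0 := by rw [hwα]; exact mul_ne_zero (Nat.cast_ne_zero.mpr hk) hu
  rw [hw, mul_comm, rootMultiplicity_mul_X_sub_C_pow (fun h => hw0 (by simp [h])),
    rootMultiplicity_eq_zero hw0, zero_add]

theorem rootMultiplicity_iterate_comp_X_sub_X_of_isFixedPt [CharZero L] {q : L[X]} {α : L}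
    (hα : q.eval α = α) {k : ℕ} (hk : k ≠ 0) :
    rootMultiplicity α (q.comp^[k] X - X) =
      if orderOf ((derivative q).eval α) ∣ k then
        rootMultiplicity α (q.comp^[orderOf ((derivative q).eval α)] X - X)
      else 1 := by
  have hfix : ∀ j, (q.comp^[j] X).eval α = α := fun j => by
    simp [iterate_fixed (f := fun x => q.eval x) hα]
  split_ifs with hr
  · obtain ⟨j, rfl⟩ := hr
    rw [iterate_comp_X_mul]
    refine rootMultiplicity_iterate_comp_X_sub_X (hfix _) ?_ (right_ne_zero_of_mul hk)
    rw [eval_derivative_iterate_comp_X hα, pow_orderOf_eq_one]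
  · refine rootMultiplicity_sub_X_eq_one (hfix k) ?_
    rw [eval_derivative_iterate_comp_X hα]
    exact fun h => hr (orderOf_dvd_of_pow_eq_one h)

theorem exists_rootMultiplicity_iterate_comp_X_sub_X_eq [CharZero L] {p : L[X]}
    (hp : 2 ≤ p.natDegree) {α : L} (hα : 0 < minimalPeriod (fun x => p.eval x) α) :
    ∃ b t : ℕ, ∀ n ≠ 0, rootMultiplicity α (p.comp^[n] X - X) =
      (if minimalPeriod (fun x => p.eval x) α ∣ n then 1 else 0) + t * if b ∣ n then 1 else 0 := by
  set m := minimalPeriod (fun x => p.eval x) α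
  set q := p.comp^[m] X
  have hq : q.eval α = α := by
    simp only [q, iterate_comp_eval, eval_X]
    exact (isPeriodicPt_minimalPeriod _ α).eq
  set r := orderOf ((derivative q).eval α) with hr_def
  refine ⟨m * r, rootMultiplicity α (q.comp^[r] X - X) - 1, fun n hn => ?_⟩
  by_cases hmn : m ∣ n
  · obtain ⟨k, rfl⟩ := hmn
    have hk : k ≠ 0 := right_ne_zero_of_mul hn
    rw [iterate_comp_X_mul, rootMultiplicity_iterate_comp_X_sub_X_of_isFixedPt hq hk, ← hr_def]
    simp only [Nat.mul_dvd_mul_iff_left hα, dvd_mul_right, if_true]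
    split_ifs with hr
    · have hr0 : r ≠ 0 := by rintro h; rw [h, zero_dvd_iff] at hr; exact hk hr
      have hroot : 0 < rootMultiplicity α (q.comp^[r] X - X) := by
        rw [← iterate_comp_X_mul]
        exact (rootMultiplicity_pos (iterate_comp_X_sub_X_ne_zero hp (mul_ne_zero hα.ne' hr0))).2
          (isRoot_iterate_comp_X_sub_X_iff.2 ((isPeriodicPt_minimalPeriod _ α).mul_const r))
      omega
    · simp
  · have hmrn : ¬ m * r ∣ n := fun h => hmn (dvd_of_mul_right_dvd h)
    rw [if_neg hmn, if_neg hmrn, mul_zero, add_zero, rootMultiplicity_eq_zero]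
    rw [isRoot_iterate_comp_X_sub_X_iff, isPeriodicPt_iff_minimalPeriod_dvd]
    exact hmn

theorem ite_minimalPeriod_eq_le_sum_moebius_mul_rootMultiplicity [CharZero L] {p : L[X]}
    (hp : 2 ≤ p.natDegree) {α : L} (hα : 0 < minimalPeriod (fun x => p.eval x) α)
    {N : ℕ} (hN : 0 < N) :
    (if minimalPeriod (fun x => p.eval x) α = N then 1 else 0 : ℤ) ≤
      ∑ n ∈ N.divisors, μ (N / n) * (rootMultiplicity α (p.comp^[n] X - X) : ℤ) := by
  obtain ⟨b, t, h⟩ := exists_rootMultiplicity_iterate_comp_X_sub_X_eq hp hα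
  set m := minimalPeriod (fun x => p.eval x) α
  calc (if m = N then 1 else 0 : ℤ)
      ≤ (if m = N then 1 else 0) + t * if b = N then 1 else 0 := by
        simp only [le_add_iff_nonneg_right]; positivity
    _ = ∑ n ∈ N.divisors, (μ (N / n) * (if m ∣ n then 1 else 0) +
          t * (μ (N / n) * if b ∣ n then 1 else 0)) := by
        rw [Finset.sum_add_distrib, ← Finset.mul_sum, sum_divisors_moebius_mul_ite_dvd hN,
          sum_divisors_moebius_mul_ite_dvd hN]
    _ = _ := Finset.sum_congr rfl fun n hn => by
        rw [h n (Nat.pos_of_mem_divisors hn).ne']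
        push_cast
        ring

theorem sum_rootMultiplicity_eq_natDegree [IsAlgClosed L] {P : L[X]} (hP : P ≠ 0) {R : Finset L}
    (hR : ∀ α, P.IsRoot α → α ∈ R) : ∑ α ∈ R, rootMultiplicity α P = P.natDegree := by
  classical
  simp_rw [← count_roots]
  rw [Multiset.sum_count_eq_card fun α hα => hR α ((mem_roots hP).1 hα),
    IsAlgClosed.card_roots_eq_natDegree]

end Polynomial

def dynatomicDegree (d N : ℕ) : ℤ := ∑ n ∈ N.divisors, μ (N / n) * (d : ℤ) ^ n

section PeriodicPoints

variable {L : Type*} [Field L]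

theorem encard_setOf_minimalPeriod_eq_le_of_isAlgClosed [IsAlgClosed L] [CharZero L]
    {p : L[X]} (hp : 2 ≤ p.natDegree) {N : ℕ} (hN : 0 < N) :
    {α | minimalPeriod (fun x => p.eval x) α = N}.encard ≤
      (dynatomicDegree p.natDegree N).toNat := by
  classical
  set f := fun x => p.eval x
  set R := (p.comp^[N] X - X).roots.toFinset
  have hmemR : ∀ α, α ∈ R ↔ IsPeriodicPt f N α := fun α => by
    rw [Multiset.mem_toFinset, mem_roots (iterate_comp_X_sub_X_ne_zero hp hN.ne'),
      isRoot_iterate_comp_X_sub_X_iff]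
  have hS : {α | minimalPeriod f α = N} = ↑(R.filter fun α => minimalPeriod f α = N) := by
    ext α
    simp only [Set.mem_ofPred_eq, Finset.coe_filter, hmemR, iff_and_self]
    rintro rfl
    exact isPeriodicPt_minimalPeriod f α
  have hsum : ∀ n ∈ N.divisors,
      ∑ α ∈ R, (rootMultiplicity α (p.comp^[n] X - X) : ℤ) = (p.natDegree : ℤ) ^ n := by
    intro n hn
    have hn0 := (Nat.pos_of_mem_divisors hn).ne'
    have := sum_rootMultiplicity_eq_natDegree (iterate_comp_X_sub_X_ne_zero hp hn0) (R := R)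
      fun α hα => (hmemR α).2 ((isRoot_iterate_comp_X_sub_X_iff.1 hα).trans_dvd
        (Nat.dvd_of_mem_divisors hn))
    rw [natDegree_iterate_comp_X_sub_X hp hn0] at this
    exact_mod_cast this
  have hcard : ((R.filter fun α => minimalPeriod f α = N).card : ℤ) ≤
      dynatomicDegree p.natDegree N := calc
    _ = ∑ α ∈ R, (if minimalPeriod f α = N then 1 else 0 : ℤ) := by
      rw [Finset.card_filter]; push_cast; rfl
    _ ≤ ∑ α ∈ R, ∑ n ∈ N.divisors, μ (N / n) * (rootMultiplicity α (p.comp^[n] X - X) : ℤ) :=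
      Finset.sum_le_sum fun α hα => ite_minimalPeriod_eq_le_sum_moebius_mul_rootMultiplicity hp
        (((hmemR α).1 hα).minimalPeriod_pos hN) hN
    _ = dynatomicDegree p.natDegree N := by
      rw [Finset.sum_comm, dynatomicDegree]
      exact Finset.sum_congr rfl fun n hn => by rw [← Finset.mul_sum, hsum n hn]
  rw [hS, Set.encard_coe_eq_coe_finsetCard]
  exact_mod_cast (show _ ≤ (dynatomicDegree p.natDegree N).toNat by omega)

theorem encard_setOf_minimalPeriod_eq_le [CharZero L] {p : L[X]}
    (hp : 2 ≤ p.natDegree) {N : ℕ} (hN : 0 < N) :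
    {α | minimalPeriod (fun x => p.eval x) α = N}.encard ≤
      (dynatomicDegree p.natDegree N).toNat := by
  set φ := algebraMap L (AlgebraicClosure L)
  have hφ : Semiconj φ (fun x => p.eval x) (fun x => (p.map φ).eval x) :=
    fun x => (eval_map_apply φ x).symm
  calc {α | minimalPeriod (fun x => p.eval x) α = N}.encard
      = (φ '' {α | minimalPeriod (fun x => p.eval x) α = N}).encard :=
        (φ.injective.injOn.encard_image).symm
    _ ≤ {α | minimalPeriod (fun x => (p.map φ).eval x) α = N}.encard := by
        refine Set.encard_le_encard ?_
        rintro _ ⟨α, hα, rfl⟩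
        exact (minimalPeriod_apply_eq_of_semiconj φ.injective hφ α).trans hα
    _ ≤ (dynatomicDegree p.natDegree N).toNat := by
        simpa [natDegree_map] using
          encard_setOf_minimalPeriod_eq_le_of_isAlgClosed (p := p.map φ) (by rwa [natDegree_map]) hN

end PeriodicPoints

/-- Let `K` be a number field.  The set of `c ∈ K` for which the
graph `G(f_c, K)` of `K`-rational preperiodic points of `f_c(z) = z² + c` fails to be
strongly admissible — i.e. some preperiodic `β` has exactly one `K`-rational preimage,
or for some `N ≥ 2` there are more than `D(N)` points of exact period `N` in `K`, or
`f_c` has exactly one fixed point in `K` — is finite. -/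
theorem stmt8 (K : Type) [Field K] [NumberField K] :
    {c : K |
      (∃ β : K, (∃ m n : ℕ, m < n ∧
          (fun z : K => z ^ 2 + c)^[m] β = (fun z : K => z ^ 2 + c)^[n] β) ∧
        {α : K | α ^ 2 + c = β}.encard = 1) ∨
      (∃ N : ℕ, 2 ≤ N ∧ ((DD N).toNat : ℕ∞) <
        {α : K | (fun z : K => z ^ 2 + c)^[N] α = α ∧
          ∀ k, 0 < k → k < N → (fun z : K => z ^ 2 + c)^[k] α ≠ α}.encard) ∨
      {α : K | α ^ 2 + c = α}.encard = 1}.Finite := by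
  refine ((finite_setOf_iterate_eq K).union (Set.finite_singleton (1 / 4 : K))).subset ?_
  rintro c (⟨β, hβ, hpre⟩ | ⟨N, hN, hlt⟩ | hfix)
  · obtain rfl := eq_of_encard_preimage_sq_add_eq_one hpre
    exact Or.inl hβ
  · have hdeg : (X ^ 2 + C c).natDegree = 2 := natDegree_X_pow_add_C
    have hbound := encard_setOf_minimalPeriod_eq_le hdeg.ge (show 0 < N by omega)
    have hDD : dynatomicDegree 2 N = DD N := by simp [dynatomicDegree, DD]
    simp only [eval_add, eval_pow, eval_X, eval_C, hdeg, hDD,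
      minimalPeriod_eq_iff_of_pos (show 0 < N by omega)] at hbound
    exact absurd hlt hbound.not_gt
  · exact Or.inr (eq_one_div_four_of_encard_fixedPoints_sq_add_eq_one hfix)
end
end

section
/- With the notation and hypotheses of the isomorphism criterion for admissible graphs (G minimally generated by P₁,…,Pₙ with data D, κ_i, j_i, λ_i; G' an admissible graph generated by P'₁,…,P'ₙ): if conditions (A) and (B) hold for all i ∈ {1,…,n} — namely, for i ∈ D the orbit O(P'_i) is disjoint from G'_{i−1} and P'_i has the same preperiod and eventual period as P_i, and for i ∉ D the orbit O(P'_i) meets G'_{i−1} and g'^{κ_i}(P'_i) = −g'^{λ_i}(P'_{j_i}) — then {P'₁,…,P'ₙ} is a minimal generating set for G'. -/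
noncomputable section

/-- A vertex `p` has exact period `N` under the map `g`. -/
def ExactPeriod {V : Type*} (g : V → V) (N : ℕ) (p : V) : Prop :=
  g^[N] p = p ∧ ∀ k, 0 < k → k < N → g^[k] p ≠ p

/-- `Ō(p) = {±g^k(p) : k ≥ 0}`, where `neg` is the negation map of an admissible graph. -/
def OrbitBar {V : Type*} (g : V → V) (neg : V → V) (p : V) : Set V :=
  {q | ∃ k : ℕ, q = g^[k] p ∨ q = neg (g^[k] p)}

/-- For a generating list `P : Fin n → V`, `Gset g neg P i` is the admissible subgraph
`G_i` generated by the first `i` generators, i.e. `Ō(P 0) ∪ ⋯ ∪ Ō(P (i-1))`. -/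
def Gset {V : Type*} (g neg : V → V) {n : ℕ} (P : Fin n → V) (i : ℕ) : Set V :=
  {q | ∃ j : Fin n, (j : ℕ) < i ∧ q ∈ OrbitBar g neg (P j)}

/-- The vertex `x` has preperiod exactly `M` and eventual period exactly `N` under `g`. -/
def Portrait {V : Type*} (g : V → V) (x : V) (M N : ℕ) : Prop :=
  0 < N ∧ g^[M + N] x = g^[M] x ∧
  (∀ n, 0 < n → n < N → g^[M + n] x ≠ g^[M] x) ∧
  (∀ m, m < M → ¬ ∃ n, 0 < n ∧ g^[m + n] x = g^[m] x)

/-!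
Conditions (A) and (B) say that each generator of `G'` is attached to the earlier ones exactly
as the corresponding generator of `G`. By induction on `i`, every coincidence
`±g'^k(P'_a) = ±g'^l(P'_b)` among the first `i` generators of `G'` then also holds in `G`:
a generator whose orbit is disjoint from `G'_{i-1}` only brings coincidences along its own orbit,
and these are governed by its portrait; an attached generator `P'_i` stays outside `G'_{i-1}`,
without coincidences, until time `κ_i`, and from then on it is a word in an earlier generator.
Hence `P'_a ↦ P_a` extends to a surjective map `G' → G` commuting with `g` and `-`, which carries
generating sets of `G'` to generating sets of `G`, so `P'` is minimal because `P` is.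
-/

open Function Set

structure IsFiberInvolution {V : Type*} (g neg : V → V) : Prop where
  neg_ne : ∀ x, neg x ≠ x
  map_neg : ∀ x, g (neg x) = g x
  eq_or_eq_neg : ∀ {x y}, g x = g y → x = y ∨ x = neg y

namespace IsFiberInvolution

variable {V : Type*} {g neg : V → V} {n : ℕ} {P : Fin n → V} {i : ℕ} {p x y : V}

theorem of_ncard_fiber [Finite V] (hneg : ∀ x, neg x ≠ x ∧ g (neg x) = g x)
    (hfiber : ∀ y, {p | g p = y}.ncard = 0 ∨ {p | g p = y}.ncard = 2) :
    IsFiberInvolution g neg := by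
  refine ⟨fun x => (hneg x).1, fun x => (hneg x).2, fun {x y} hxy => ?_⟩
  have hsub : ({y, neg y} : Set V) ⊆ {p | g p = g y} := by
    rintro p (rfl | rfl)
    · rfl
    · exact (hneg y).2
  have hcard : {p | g p = g y}.ncard = 2 :=
    (hfiber (g y)).resolve_left (ncard_ne_zero_of_mem (show y ∈ {p | g p = g y} from rfl))
  have hfib := eq_of_subset_of_ncard_le hsub (by rw [hcard, ncard_pair (hneg y).1.symm])
  exact (hfib ▸ hxy : x ∈ ({y, neg y} : Set V))

theorem neg_neg (h : IsFiberInvolution g neg) (x : V) : neg (neg x) = x :=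
  (h.eq_or_eq_neg ((h.map_neg _).trans (h.map_neg x))).resolve_right (h.neg_ne (neg x))

theorem involutive (h : IsFiberInvolution g neg) : Involutive neg := h.neg_neg

theorem eq_neg_iff (h : IsFiberInvolution g neg) : x = neg y ↔ x ≠ y ∧ g x = g y :=
  ⟨by rintro rfl; exact ⟨h.neg_ne y, h.map_neg y⟩,
    fun ⟨hne, hg⟩ => (h.eq_or_eq_neg hg).resolve_left hne⟩

theorem iterate_succ_neg (h : IsFiberInvolution g neg) (k : ℕ) (x : V) :
    g^[k + 1] (neg x) = g^[k + 1] x := by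
  rw [iterate_succ_apply, iterate_succ_apply, h.map_neg]

theorem iterate_add_of_eq_neg (h : IsFiberInvolution g neg) {κ lam : ℕ} {z : V}
    (hz : g^[κ] z = neg (g^[lam] x)) (d : ℕ) : g^[κ + (d + 1)] z = g^[d + 1 + lam] x := by
  rw [add_comm, iterate_add_apply, hz, h.iterate_succ_neg, ← iterate_add_apply]

theorem exists_map_eq_iterate (h : IsFiberInvolution g neg) (hx : x ∈ OrbitBar g neg p) :
    ∃ m, g x = g^[m + 1] p := by
  obtain ⟨m, rfl | rfl⟩ := hx
  · exact ⟨m, (iterate_succ_apply' g m p).symm⟩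
  · exact ⟨m, by rw [h.map_neg, iterate_succ_apply']⟩

theorem mapsTo_orbitBar (h : IsFiberInvolution g neg) :
    MapsTo g (OrbitBar g neg p) (OrbitBar g neg p) := fun _ hx =>
  let ⟨m, hm⟩ := h.exists_map_eq_iterate hx
  ⟨m + 1, Or.inl hm⟩

theorem neg_mem_orbitBar (h : IsFiberInvolution g neg) (hx : x ∈ OrbitBar g neg p) :
    neg x ∈ OrbitBar g neg p := by
  obtain ⟨m, rfl | rfl⟩ := hx
  · exact ⟨m, Or.inr rfl⟩
  · exact ⟨m, Or.inl (h.neg_neg _)⟩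

theorem orbitBar_subset (h : IsFiberInvolution g neg) (hx : x ∈ OrbitBar g neg p) :
    OrbitBar g neg x ⊆ OrbitBar g neg p := by
  rintro q ⟨k, rfl | rfl⟩
  · exact h.mapsTo_orbitBar.iterate k hx
  · exact h.neg_mem_orbitBar (h.mapsTo_orbitBar.iterate k hx)

theorem mem_gset_of_map_eq (h : IsFiberInvolution g neg) (hxy : g x = g y)
    (hy : y ∈ Gset g neg P i) : x ∈ Gset g neg P i := by
  obtain ⟨j, hj, hy⟩ := hy
  rcases h.eq_or_eq_neg hxy with rfl | rfl
  · exact ⟨j, hj, hy⟩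
  · exact ⟨j, hj, h.neg_mem_orbitBar hy⟩

theorem notMem_orbitBar_of_minimal (h : IsFiberInvolution g neg)
    (hPgen : ∀ Q : V, ∃ i : Fin n, Q ∈ OrbitBar g neg (P i))
    (hPmin : ∀ S : Finset V, (∀ Q : V, ∃ p ∈ S, Q ∈ OrbitBar g neg p) → n ≤ S.card)
    {a b : Fin n} (hab : a ≠ b) : P a ∉ OrbitBar g neg (P b) := by
  classical
  intro hPa
  have hgen : ∀ Q, ∃ p ∈ (Finset.univ.erase a).image P, Q ∈ OrbitBar g neg p := by
    intro Q
    obtain ⟨l, hl⟩ := hPgen Q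
    by_cases hla : l = a
    · subst hla
      exact ⟨P b, Finset.mem_image_of_mem P (by simp [hab.symm]), h.orbitBar_subset hPa hl⟩
    · exact ⟨P l, Finset.mem_image_of_mem P (by simp [hla]), hl⟩
  have hcard := (hPmin _ hgen).trans Finset.card_image_le
  rw [Finset.card_erase_of_mem (Finset.mem_univ a), Finset.card_univ, Fintype.card_fin] at hcard
  omega

end IsFiberInvolution

section Generators

variable {V : Type*} {g neg : V → V} {n : ℕ} {P : Fin n → V} {x : V}

theorem gset_mono {i i' : ℕ} (h : i ≤ i') : Gset g neg P i ⊆ Gset g neg P i' :=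
  fun _ ⟨j, hj, hq⟩ => ⟨j, hj.trans_le h, hq⟩

theorem exists_minimal_index_of_mem_gset {i : ℕ} (hx : x ∈ Gset g neg P i) :
    ∃ j : Fin n, (j : ℕ) < i ∧ x ∈ OrbitBar g neg (P j) ∧ x ∉ Gset g neg P j := by
  obtain ⟨j₀, hj₀i, hj₀⟩ := hx
  obtain ⟨j, hj, hmin⟩ :=
    wellFounded_lt.has_min {j : Fin n | x ∈ OrbitBar g neg (P j)} ⟨j₀, hj₀⟩
  refine ⟨j, (show (j : ℕ) ≤ j₀ from not_lt.1 (hmin j₀ hj₀)).trans_lt hj₀i, hj, ?_⟩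
  exact fun ⟨j', hj', hx'⟩ => hmin j' hx' hj'

variable (h : IsFiberInvolution g neg)
    (hPgen : ∀ Q : V, ∃ i : Fin n, Q ∈ OrbitBar g neg (P i))
    (hPmin : ∀ S : Finset V, (∀ Q : V, ∃ p ∈ S, Q ∈ OrbitBar g neg p) → n ≤ S.card)
include h hPgen hPmin

theorem exists_iterate_eq_neg_of_first_entry {i j : Fin n} {κ : ℕ} (hji : (j : ℕ) < i)
    (hmin : ∀ k < κ, g^[k] (P i) ∉ Gset g neg P i) (hx : g^[κ] (P i) ∈ OrbitBar g neg (P j)) :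
    ∃ l, g^[l] (P j) = neg (g^[κ] (P i)) := by
  have hij : i ≠ j := by rintro rfl; exact lt_irrefl _ hji
  obtain ⟨l, hl | hl⟩ := hx
  · exfalso
    cases κ with
    | zero => exact h.notMem_orbitBar_of_minimal hPgen hPmin hij ⟨l, Or.inl hl⟩
    | succ κ =>
      cases l with
      | zero => exact h.notMem_orbitBar_of_minimal hPgen hPmin hij.symm ⟨κ + 1, Or.inl hl.symm⟩
      | succ l =>
        refine hmin κ κ.lt_succ_self (h.mem_gset_of_map_eq ?_ ⟨j, hji, l, Or.inl rfl⟩)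
        rw [← iterate_succ_apply' g κ, ← iterate_succ_apply' g l]
        exact hl
  · exact ⟨l, by rw [hl, h.neg_neg]⟩

theorem exists_attachment {i : Fin n} (hD : ∃ k, g^[k] (P i) ∈ Gset g neg P i) :
    ∃ (κ : ℕ) (j : Fin n) (lam : ℕ),
      (g^[κ] (P i) ∈ Gset g neg P i ∧ ∀ k, k < κ → g^[k] (P i) ∉ Gset g neg P i) ∧
      (g^[κ] (P i) ∈ Gset g neg P ((j : ℕ) + 1) ∧ g^[κ] (P i) ∉ Gset g neg P j) ∧
      (g^[lam] (P j) = neg (g^[κ] (P i)) ∧ ∀ l, l < lam → g^[l] (P j) ≠ neg (g^[κ] (P i))) := by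
  classical
  have hmin : ∀ k < Nat.find hD, g^[k] (P i) ∉ Gset g neg P i := fun k hk => Nat.find_min hD hk
  obtain ⟨j, hji, hj, hjmin⟩ := exists_minimal_index_of_mem_gset (Nat.find_spec hD)
  have hlam := exists_iterate_eq_neg_of_first_entry h hPgen hPmin hji hmin hj
  exact ⟨Nat.find hD, j, Nat.find hlam, ⟨Nat.find_spec hD, hmin⟩,
    ⟨⟨j, Nat.lt_succ_self _, hj⟩, hjmin⟩, Nat.find_spec hlam, fun l hl => Nat.find_min hlam hl⟩

end Generators

section Iteration

variable {α : Type*} {f : α → α} {x : α} {M N a b : ℕ}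

theorem iterate_eq_iterate_iff_modEq (hx : x ∈ periodicPts f) {m k : ℕ} :
    f^[m] x = f^[k] x ↔ m ≡ k [MOD minimalPeriod f x] := by
  have hpos := minimalPeriod_pos_of_mem_periodicPts hx
  rw [← iterate_mod_minimalPeriod_eq, ← iterate_mod_minimalPeriod_eq (n := k),
    iterate_eq_iterate_iff_of_lt_minimalPeriod (Nat.mod_lt _ hpos) (Nat.mod_lt _ hpos)]
  rfl

theorem exists_portrait [Finite α] (f : α → α) (x : α) : ∃ M N, Portrait f x M N := by
  classical
  obtain ⟨a, b, hab, heq⟩ := Finite.exists_ne_map_eq_of_infinite (fun n : ℕ => f^[n] x)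
  have hstart : ∃ m k, 0 < k ∧ f^[m + k] x = f^[m] x := by
    rcases hab.lt_or_gt with h | h
    · exact ⟨a, b - a, by omega, by rw [Nat.add_sub_cancel' h.le]; exact heq.symm⟩
    · exact ⟨b, a - b, by omega, by rw [Nat.add_sub_cancel' h.le]; exact heq⟩
  have hper : ∃ k, 0 < k ∧ f^[Nat.find hstart + k] x = f^[Nat.find hstart] x :=
    Nat.find_spec hstart
  exact ⟨_, _, (Nat.find_spec hper).1, (Nat.find_spec hper).2,
    fun k hk hkN e => Nat.find_min hper hkN ⟨hk, e⟩, fun m hm => Nat.find_min hstart hm⟩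

namespace Portrait

theorem minimalPeriod_eq (h : Portrait f x M N) : minimalPeriod f (f^[M] x) = N := by
  have hper : IsPeriodicPt f N (f^[M] x) := by
    rw [IsPeriodicPt, IsFixedPt, ← iterate_add_apply, add_comm]
    exact h.2.1
  refine le_antisymm (hper.minimalPeriod_le h.1) (not_lt.1 fun hlt => ?_)
  refine h.2.2.1 _ (hper.minimalPeriod_pos h.1) hlt ?_
  rw [add_comm, iterate_add_apply]
  exact isPeriodicPt_minimalPeriod f _

theorem iterate_ne (h : Portrait f x M N) (hab : a < b) (ha : a < M) : f^[a] x ≠ f^[b] x :=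
  fun e => h.2.2.2 a ha ⟨b - a, by omega, by rw [Nat.add_sub_cancel' hab.le, e]⟩

theorem iterate_eq_iterate_iff (h : Portrait f x M N) :
    f^[a] x = f^[b] x ↔ a = b ∨ (M ≤ a ∧ M ≤ b ∧ a ≡ b [MOD N]) := by
  by_cases hab : a = b
  · simp [hab]
  by_cases hM : M ≤ a ∧ M ≤ b
  · obtain ⟨a, rfl⟩ := Nat.exists_eq_add_of_le hM.1
    obtain ⟨b, rfl⟩ := Nat.exists_eq_add_of_le hM.2
    have hy : f^[M] x ∈ periodicPts f :=
      minimalPeriod_pos_iff_mem_periodicPts.1 (h.minimalPeriod_eq ▸ h.1)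
    have key : f^[M + a] x = f^[M + b] x ↔ a ≡ b [MOD N] := by
      rw [add_comm M a, add_comm M b, iterate_add_apply, iterate_add_apply,
        iterate_eq_iterate_iff_modEq hy, h.minimalPeriod_eq]
    simp only [key, (Nat.ModEq.refl M).add_iff_left, hab, Nat.le_add_right, true_and, false_or]
  · refine iff_of_false (fun e => ?_) (by tauto)
    rcases lt_or_gt_of_ne hab with hlt | hlt
    · exact h.iterate_ne hlt (by omega) e
    · exact h.iterate_ne hlt (by omega) e.symm

theorem iterate_eq_iterate_congr {β : Type*} {f' : β → β} {x' : β} (h : Portrait f x M N)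
    (h' : Portrait f' x' M N) (a b : ℕ) : f'^[a] x' = f'^[b] x' ↔ f^[a] x = f^[b] x := by
  rw [h.iterate_eq_iterate_iff, h'.iterate_eq_iterate_iff]

end Portrait

theorem iterate_injOn_Iic_of_first_entry {S : Set α} {κ : ℕ} (hκ : f^[κ] x ∈ S)
    (hmin : ∀ t < κ, f^[t] x ∉ S) : InjOn (f^[·] x) (Iic κ) := by
  have hne : ∀ a b, a < b → b ≤ κ → f^[a] x ≠ f^[b] x := by
    intro a b hab hb e
    apply hmin (κ - b + a) (by omega)
    rw [iterate_add_apply, e, ← iterate_add_apply, Nat.sub_add_cancel hb]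
    exact hκ
  intro a ha b hb e
  rcases lt_trichotomy a b with hab | rfl | hab
  · exact absurd e (hne a b hab hb)
  · rfl
  · exact absurd e.symm (hne b a hab ha)

end Iteration

section Reflects

variable {V V' : Type*} {g neg : V → V} {g' neg' : V' → V'} {n : ℕ} {P : Fin n → V}
  {P' : Fin n → V'} {x y : V} {x' y' : V'}

def Reflects (neg' : V' → V') (neg : V → V) (x' y' : V') (x y : V) : Prop :=
  (x' = y' → x = y) ∧ (x' = neg' y' → x = neg y)

theorem reflects_of_ne (h₁ : x' ≠ y') (h₂ : x' ≠ neg' y') : Reflects neg' neg x' y' x y :=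
  ⟨fun e => absurd e h₁, fun e => absurd e h₂⟩

namespace Reflects

variable (hinv : Involutive neg) (hinv' : Involutive neg')
include hinv hinv'

theorem symm (hr : Reflects neg' neg x' y' x y) : Reflects neg' neg y' x' y x :=
  ⟨fun e => (hr.1 e.symm).symm, fun e => (hinv.eq_iff.2 (hr.2 (hinv'.eq_iff.1 e.symm))).symm⟩

theorem neg_left (hr : Reflects neg' neg x' y' x y) : Reflects neg' neg (neg' x') y' (neg x) y :=
  ⟨fun e => hinv.eq_iff.2 (hr.2 (hinv'.eq_iff.1 e)),
    fun e => congrArg neg (hr.1 (hinv'.injective e))⟩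

end Reflects

section Iterates

variable (h : IsFiberInvolution g neg) (h' : IsFiberInvolution g' neg')
include h h'

theorem reflects_iterate_of_iterate_eq_iff
    (hx : ∀ a b, g'^[a] x' = g'^[b] x' ↔ g^[a] x = g^[b] x) (k l : ℕ) :
    Reflects neg' neg (g'^[k] x') (g'^[l] x') (g^[k] x) (g^[l] x) := by
  refine ⟨(hx k l).1, fun e => ?_⟩
  rw [h'.eq_neg_iff, ← iterate_succ_apply' g' k, ← iterate_succ_apply' g' l, ne_eq, hx, hx] at e
  rwa [h.eq_neg_iff, ← iterate_succ_apply' g k, ← iterate_succ_apply' g l]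

theorem reflects_iterate_of_iterate_eq_neg {z : V} {z' : V'} {κ lam k : ℕ}
    (hz : g^[κ] z = neg (g^[lam] x)) (hz' : g'^[κ] z' = neg' (g'^[lam] x')) (hk : κ ≤ k)
    (hr : ∀ m, Reflects neg' neg (g'^[m] x') y' (g^[m] x) y) :
    Reflects neg' neg (g'^[k] z') y' (g^[k] z) y := by
  obtain ⟨d, rfl⟩ := Nat.exists_eq_add_of_le hk
  cases d with
  | zero => rw [add_zero, hz, hz']; exact (hr lam).neg_left h.involutive h'.involutive
  | succ d => rw [h.iterate_add_of_eq_neg hz, h'.iterate_add_of_eq_neg hz']; exact hr _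

omit h in
theorem reflects_iterate_of_injOn {κ k l : ℕ} (hinj : InjOn (g'^[·] x') (Iic κ)) (hk : k < κ)
    (hl : l < κ) : Reflects neg' neg (g'^[k] x') (g'^[l] x') (g^[k] x) (g^[l] x) := by
  refine ⟨fun e => by rw [hinj (mem_Iic.2 hk.le) (mem_Iic.2 hl.le) e], fun e => ?_⟩
  obtain ⟨hne, hsucc⟩ := h'.eq_neg_iff.1 e
  rw [← iterate_succ_apply' g' k, ← iterate_succ_apply' g' l] at hsucc
  have : k + 1 = l + 1 := hinj (mem_Iic.2 hk) (mem_Iic.2 hl) hsucc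
  exact (hne (by rw [Nat.succ_injective this])).elim

end Iterates

def ReflectsBelow (g neg : V → V) (g' neg' : V' → V') (P : Fin n → V) (P' : Fin n → V')
    (i : ℕ) : Prop :=
  ∀ a b : Fin n, (a : ℕ) < i → (b : ℕ) < i → ∀ k l,
    Reflects neg' neg (g'^[k] (P' a)) (g'^[l] (P' b)) (g^[k] (P a)) (g^[l] (P b))

theorem reflectsBelow_zero : ReflectsBelow g neg g' neg' P P' 0 :=
  fun _ _ ha => absurd ha (Nat.not_lt_zero _)

theorem ReflectsBelow.succ (hinv : Involutive neg) (hinv' : Involutive neg') {i : Fin n}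
    (hR : ReflectsBelow g neg g' neg' P P' i)
    (hnew : ∀ b : Fin n, b ≤ i → ∀ k l,
      Reflects neg' neg (g'^[k] (P' i)) (g'^[l] (P' b)) (g^[k] (P i)) (g^[l] (P b))) :
    ReflectsBelow g neg g' neg' P P' (i + 1) := by
  intro a b ha hb k l
  rcases (Nat.lt_succ_iff.1 ha).lt_or_eq with ha | ha
  · rcases (Nat.lt_succ_iff.1 hb).lt_or_eq with hb | hb
    · exact hR a b ha hb k l
    · rw [Fin.ext hb]
      exact (hnew a ha.le l k).symm hinv hinv'
  · rw [Fin.ext ha]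
    exact hnew b (Nat.lt_succ_iff.1 hb) k l

variable (h : IsFiberInvolution g neg) (h' : IsFiberInvolution g' neg')
include h h'

theorem reflects_generator_of_disjoint {i : Fin n}
    (hdisj : ∀ k, g'^[k] (P' i) ∉ Gset g' neg' P' i)
    (hshape : ∀ a b, g'^[a] (P' i) = g'^[b] (P' i) ↔ g^[a] (P i) = g^[b] (P i)) :
    ∀ b : Fin n, b ≤ i → ∀ k l,
      Reflects neg' neg (g'^[k] (P' i)) (g'^[l] (P' b)) (g^[k] (P i)) (g^[l] (P b)) := by
  intro b hb k l
  rcases hb.lt_or_eq with hb | rfl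
  · exact reflects_of_ne (fun e => hdisj k (e ▸ ⟨b, hb, l, Or.inl rfl⟩))
      (fun e => hdisj k (e ▸ ⟨b, hb, l, Or.inr rfl⟩))
  · exact reflects_iterate_of_iterate_eq_iff h h' hshape k l

theorem notMem_gset_of_attached {i j : Fin n} {κ lam : ℕ}
    (hR : ReflectsBelow g neg g' neg' P P' i) (hji : j < i)
    (hmin : ∀ t < κ, g^[t] (P i) ∉ Gset g neg P i) (hE : g^[lam] (P j) = neg (g^[κ] (P i)))
    (hE' : g'^[κ] (P' i) = neg' (g'^[lam] (P' j))) :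
    ∀ t < κ, g'^[t] (P' i) ∉ Gset g' neg' P' i := by
  rintro t ht ⟨b, hb, hmem⟩
  -- Pulled back to `G` through `hR`, this entry would make `P i` enter `G_{i-1}` before `κ`.
  obtain ⟨m, hm⟩ := h'.exists_map_eq_iterate hmem
  have hκ' : g'^[κ] (P' i) = g'^[κ - t + m] (P' b) := by
    calc g'^[κ] (P' i) = g'^[κ - t - 1] (g' (g'^[t] (P' i))) := by
          rw [← iterate_succ_apply, ← iterate_add_apply]; congr 1; omega
      _ = g'^[κ - t + m] (P' b) := by rw [hm, ← iterate_add_apply]; congr 1; omega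
  have hκ := (hR j b hji hb lam (κ - t + m)).2 (h'.involutive.eq_iff.1 (hE'.symm.trans hκ'))
  rw [hE, h.involutive.injective.eq_iff] at hκ
  refine hmin (κ - 1) (by omega) (h.mem_gset_of_map_eq ?_ ⟨b, hb, κ - t - 1 + m, Or.inl rfl⟩)
  rw [← iterate_succ_apply' g (κ - 1), ← iterate_succ_apply' g (κ - t - 1 + m),
    show (κ - 1).succ = κ by omega, show (κ - t - 1 + m).succ = κ - t + m by omega]
  exact hκ

theorem reflects_generator_of_attached {i j : Fin n} {κ lam : ℕ}
    (hR : ReflectsBelow g neg g' neg' P P' i) (hji : j < i)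
    (hmin : ∀ t < κ, g^[t] (P i) ∉ Gset g neg P i) (hE : g^[lam] (P j) = neg (g^[κ] (P i)))
    (hE' : g'^[κ] (P' i) = neg' (g'^[lam] (P' j))) :
    ∀ b : Fin n, b ≤ i → ∀ k l,
      Reflects neg' neg (g'^[k] (P' i)) (g'^[l] (P' b)) (g^[k] (P i)) (g^[l] (P b)) := by
  have hinv := h.involutive
  have hinv' := h'.involutive
  have hmin' := notMem_gset_of_attached h h' hR hji hmin hE hE'
  have hinj := iterate_injOn_Iic_of_first_entry (hE' ▸ ⟨j, hji, lam, Or.inr rfl⟩) hmin'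
  have hlate : ∀ k, κ ≤ k → ∀ (y' : V') (y : V),
      (∀ m, Reflects neg' neg (g'^[m] (P' j)) y' (g^[m] (P j)) y) →
      Reflects neg' neg (g'^[k] (P' i)) y' (g^[k] (P i)) y :=
    fun k hk _ _ => reflects_iterate_of_iterate_eq_neg h h' (hinv.eq_iff.1 hE.symm) hE' hk
  have hold : ∀ b : Fin n, b < i → ∀ k l,
      Reflects neg' neg (g'^[k] (P' i)) (g'^[l] (P' b)) (g^[k] (P i)) (g^[l] (P b)) := by
    intro b hb k l
    by_cases hk : κ ≤ k
    · exact hlate k hk _ _ fun m => hR j b hji hb m l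
    · exact reflects_of_ne (fun e => hmin' k (by omega) (e ▸ ⟨b, hb, l, Or.inl rfl⟩))
        (fun e => hmin' k (by omega) (e ▸ ⟨b, hb, l, Or.inr rfl⟩))
  intro b hb k l
  rcases hb.lt_or_eq with hb | rfl
  · exact hold b hb k l
  by_cases hk : κ ≤ k
  · exact hlate k hk _ _ fun m => (hold j hji l m).symm hinv hinv'
  by_cases hl : κ ≤ l
  · exact (hlate l hl _ _ fun m => (hold j hji k m).symm hinv hinv').symm hinv hinv'
  · exact reflects_iterate_of_injOn h' hinj (by omega) (by omega)

end Reflects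

section Transport

variable {V V' : Type*} {g neg : V → V} {g' neg' : V' → V'} {n : ℕ} {P : Fin n → V}
  {P' : Fin n → V'} {x y : V} {x' : V'} {ψ : V' → V}

def Corresponds (g neg : V → V) (g' neg' : V' → V') (P : Fin n → V) (P' : Fin n → V')
    (x' : V') (x : V) : Prop :=
  ∃ a k, (x' = g'^[k] (P' a) ∧ x = g^[k] (P a)) ∨
    (x' = neg' (g'^[k] (P' a)) ∧ x = neg (g^[k] (P a)))

namespace Corresponds

theorem unique (hinv : Involutive neg) (hinv' : Involutive neg')
    (hR : ReflectsBelow g neg g' neg' P P' n) (hx : Corresponds g neg g' neg' P P' x' x)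
    (hy : Corresponds g neg g' neg' P P' x' y) : x = y := by
  obtain ⟨a, k, ⟨rfl, rfl⟩ | ⟨rfl, rfl⟩⟩ := hx <;> obtain ⟨b, l, ⟨e, rfl⟩ | ⟨e, rfl⟩⟩ := hy <;>
    have hr := hR a b a.isLt b.isLt k l
  · exact hr.1 e
  · exact hr.2 e
  · exact (hr.neg_left hinv hinv').1 e
  · exact (hr.neg_left hinv hinv').2 e

theorem apply_map (h : IsFiberInvolution g neg) (h' : IsFiberInvolution g' neg')
    (hx : Corresponds g neg g' neg' P P' x' x) : Corresponds g neg g' neg' P P' (g' x') (g x) := by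
  obtain ⟨a, k, ⟨rfl, rfl⟩ | ⟨rfl, rfl⟩⟩ := hx
  · exact ⟨a, k + 1, Or.inl ⟨(iterate_succ_apply' _ _ _).symm, (iterate_succ_apply' _ _ _).symm⟩⟩
  · exact ⟨a, k + 1, Or.inl ⟨by rw [h'.map_neg, iterate_succ_apply'],
      by rw [h.map_neg, iterate_succ_apply']⟩⟩

theorem apply_neg (hinv : Involutive neg) (hinv' : Involutive neg')
    (hx : Corresponds g neg g' neg' P P' x' x) :
    Corresponds g neg g' neg' P P' (neg' x') (neg x) := by
  obtain ⟨a, k, ⟨rfl, rfl⟩ | ⟨rfl, rfl⟩⟩ := hx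
  · exact ⟨a, k, Or.inr ⟨rfl, rfl⟩⟩
  · exact ⟨a, k, Or.inl ⟨hinv' _, hinv _⟩⟩

end Corresponds

theorem exists_surjective_semiconj (h : IsFiberInvolution g neg)
    (h' : IsFiberInvolution g' neg') (hR : ReflectsBelow g neg g' neg' P P' n)
    (hPgen : ∀ Q : V, ∃ i : Fin n, Q ∈ OrbitBar g neg (P i))
    (hP'gen : ∀ Q : V', ∃ i : Fin n, Q ∈ OrbitBar g' neg' (P' i)) :
    ∃ ψ : V' → V, Surjective ψ ∧ Semiconj ψ g' g ∧ Semiconj ψ neg' neg ∧ ∀ a, ψ (P' a) = P a := by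
  have hunique : ∀ {x' x y}, Corresponds g neg g' neg' P P' x' x →
      Corresponds g neg g' neg' P P' x' y → x = y :=
    fun hx hy => hx.unique h.involutive h'.involutive hR hy
  have htot : ∀ x', ∃ x, Corresponds g neg g' neg' P P' x' x := by
    intro x'
    obtain ⟨a, k, e | e⟩ := hP'gen x'
    · exact ⟨_, a, k, Or.inl ⟨e, rfl⟩⟩
    · exact ⟨_, a, k, Or.inr ⟨e, rfl⟩⟩
  choose ψ hψ using htot
  refine ⟨ψ, fun x => ?_, fun x' => hunique (hψ _) ((hψ x').apply_map h h'),
    fun x' => hunique (hψ _) ((hψ x').apply_neg h.involutive h'.involutive),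
    fun a => hunique (hψ _) ⟨a, 0, Or.inl ⟨rfl, rfl⟩⟩⟩
  obtain ⟨a, k, e | e⟩ := hPgen x
  · exact ⟨_, hunique (hψ _) ⟨a, k, Or.inl ⟨rfl, e⟩⟩⟩
  · exact ⟨_, hunique (hψ _) ⟨a, k, Or.inr ⟨rfl, e⟩⟩⟩

theorem mem_orbitBar_of_semiconj (hg : Semiconj ψ g' g) (hneg : Semiconj ψ neg' neg) {p : V'}
    (hx : x' ∈ OrbitBar g' neg' p) : ψ x' ∈ OrbitBar g neg (ψ p) := by
  obtain ⟨k, rfl | rfl⟩ := hx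
  · exact ⟨k, Or.inl (hg.iterate_right k p)⟩
  · exact ⟨k, Or.inr (by rw [hneg.eq, hg.iterate_right k p])⟩

theorem card_le_of_surjective_semiconj (hψ : Surjective ψ) (hg : Semiconj ψ g' g)
    (hneg : Semiconj ψ neg' neg)
    (hmin : ∀ S : Finset V, (∀ Q : V, ∃ p ∈ S, Q ∈ OrbitBar g neg p) → n ≤ S.card)
    (S' : Finset V') (hS' : ∀ Q : V', ∃ p ∈ S', Q ∈ OrbitBar g' neg' p) : n ≤ S'.card := by
  classical
  refine (hmin (S'.image ψ) fun Q => ?_).trans Finset.card_image_le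
  obtain ⟨Q', rfl⟩ := hψ Q
  obtain ⟨p', hp', hQ'⟩ := hS' Q'
  exact ⟨ψ p', Finset.mem_image_of_mem ψ hp', mem_orbitBar_of_semiconj hg hneg hQ'⟩

end Transport

theorem stmt12_general (V V' : Type) [Fintype V] [Fintype V']
    (g neg : V → V)
    (hneg : ∀ P : V, neg P ≠ P ∧ g (neg P) = g P)
    (hfiber : ∀ y : V, ({p : V | g p = y}).ncard = 0 ∨ ({p : V | g p = y}).ncard = 2)
    (g' neg' : V' → V')
    (hneg' : ∀ P : V', neg' P ≠ P ∧ g' (neg' P) = g' P)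
    (hfiber' : ∀ y : V', ({p : V' | g' p = y}).ncard = 0 ∨ ({p : V' | g' p = y}).ncard = 2)
    (n : ℕ) (P : Fin n → V)
    (hPgen : ∀ Q : V, ∃ i : Fin n, Q ∈ OrbitBar g neg (P i))
    (hPmin : ∀ S : Finset V, (∀ Q : V, ∃ p ∈ S, Q ∈ OrbitBar g neg p) → n ≤ S.card)
    (P' : Fin n → V')
    (hP'gen : ∀ Q : V', ∃ i : Fin n, Q ∈ OrbitBar g' neg' (P' i))
    (hAB : ∀ i : Fin n,
        ((∀ k : ℕ, g^[k] (P i) ∉ Gset g neg P (i : ℕ)) →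
          (∀ k : ℕ, g'^[k] (P' i) ∉ Gset g' neg' P' (i : ℕ)) ∧
          (∀ M N : ℕ, Portrait g (P i) M N ↔ Portrait g' (P' i) M N)) ∧
        ((∃ k : ℕ, g^[k] (P i) ∈ Gset g neg P (i : ℕ)) →
          (∃ k : ℕ, g'^[k] (P' i) ∈ Gset g' neg' P' (i : ℕ)) ∧
          (∀ (κ : ℕ) (j : Fin n) (lam : ℕ),
            (g^[κ] (P i) ∈ Gset g neg P (i : ℕ) ∧
              ∀ k, k < κ → g^[k] (P i) ∉ Gset g neg P (i : ℕ)) →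
            (g^[κ] (P i) ∈ Gset g neg P ((j : ℕ) + 1) ∧
              g^[κ] (P i) ∉ Gset g neg P (j : ℕ)) →
            (g^[lam] (P j) = neg (g^[κ] (P i)) ∧
              ∀ l, l < lam → g^[l] (P j) ≠ neg (g^[κ] (P i))) →
            g'^[κ] (P' i) = neg' (g'^[lam] (P' j))))) :
    Function.Injective P' ∧
    ∀ S : Finset V', (∀ Q : V', ∃ p ∈ S, Q ∈ OrbitBar g' neg' p) → n ≤ S.card := by
  have hFI := IsFiberInvolution.of_ncard_fiber hneg hfiber
  have hFI' := IsFiberInvolution.of_ncard_fiber hneg' hfiber'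
  have hR : ∀ m ≤ n, ReflectsBelow g neg g' neg' P P' m := by
    intro m hm
    induction m with
    | zero => exact reflectsBelow_zero
    | succ m ih =>
      let i : Fin n := ⟨m, hm⟩
      have hRi := ih (Nat.le_of_succ_le hm)
      refine hRi.succ (i := i) hFI.involutive hFI'.involutive ?_
      by_cases hD : ∃ k, g^[k] (P i) ∈ Gset g neg P i
      · obtain ⟨κ, j, lam, hκ, hj, hlam⟩ := exists_attachment hFI hPgen hPmin hD
        have hji : j < i := not_le.1 fun hij => hj.2 (gset_mono hij hκ.1)
        exact reflects_generator_of_attached hFI hFI' hRi hji hκ.2 hlam.1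
          (((hAB i).2 hD).2 κ j lam hκ hj hlam)
      · obtain ⟨hD', hport⟩ := (hAB i).1 (not_exists.1 hD)
        obtain ⟨M, N, hMN⟩ := exists_portrait g (P i)
        exact reflects_generator_of_disjoint hFI hFI' hD'
          (hMN.iterate_eq_iterate_congr ((hport M N).1 hMN))
  obtain ⟨ψ, hψ, hψg, hψneg, hψP⟩ :=
    exists_surjective_semiconj hFI hFI' (hR n le_rfl) hPgen hP'gen
  refine ⟨fun a b hab => ?_, card_le_of_surjective_semiconj hψ hψg hψneg hPmin⟩
  by_contra hne
  exact hFI.notMem_orbitBar_of_minimal hPgen hPmin hne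
    ⟨0, Or.inl (by rw [← hψP a, hab, hψP b]; rfl)⟩

/-- With the notation of the isomorphism criterion for admissible
graphs (`G` minimally generated by `P 0, …, P (n-1)`; `G'` an admissible graph
generated by `P' 0, …, P' (n-1)`): if conditions (A) and (B) hold for every `i` —
namely for `i ∈ D` the orbit `O(P' i)` is disjoint from `G'_{i-1}` and `P' i` has the
same preperiod and eventual period as `P i`, and for `i ∉ D` the orbit `O(P' i)` meets
`G'_{i-1}` and `g'^{κ_i}(P'_i) = −g'^{λ_i}(P'_{j_i})` — then `{P' 0, …, P' (n-1)}` is a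
minimal generating set for `G'`. -/
theorem stmt12 (V V' : Type) [Fintype V] [DecidableEq V] [Fintype V'] [DecidableEq V']
    (g neg : V → V)
    (hneg : ∀ P : V, neg P ≠ P ∧ g (neg P) = g P)
    (hfiber : ∀ y : V, ({p : V | g p = y}).ncard = 0 ∨ ({p : V | g p = y}).ncard = 2)
    (hcycle : ∀ N : ℕ, 2 ≤ N → (({p : V | ExactPeriod g N p}).ncard : ℤ) ≤ DD N)
    (g' neg' : V' → V')
    (hneg' : ∀ P : V', neg' P ≠ P ∧ g' (neg' P) = g' P)
    (hfiber' : ∀ y : V', ({p : V' | g' p = y}).ncard = 0 ∨ ({p : V' | g' p = y}).ncard = 2)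
    (hcycle' : ∀ N : ℕ, 2 ≤ N → (({p : V' | ExactPeriod g' N p}).ncard : ℤ) ≤ DD N)
    (n : ℕ) (P : Fin n → V) (hPinj : Function.Injective P)
    (hPgen : ∀ Q : V, ∃ i : Fin n, Q ∈ OrbitBar g neg (P i))
    (hPmin : ∀ S : Finset V, (∀ Q : V, ∃ p ∈ S, Q ∈ OrbitBar g neg p) → n ≤ S.card)
    (P' : Fin n → V')
    (hP'gen : ∀ Q : V', ∃ i : Fin n, Q ∈ OrbitBar g' neg' (P' i))
    (hAB : ∀ i : Fin n,
        ((∀ k : ℕ, g^[k] (P i) ∉ Gset g neg P (i : ℕ)) →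
          (∀ k : ℕ, g'^[k] (P' i) ∉ Gset g' neg' P' (i : ℕ)) ∧
          (∀ M N : ℕ, Portrait g (P i) M N ↔ Portrait g' (P' i) M N)) ∧
        ((∃ k : ℕ, g^[k] (P i) ∈ Gset g neg P (i : ℕ)) →
          (∃ k : ℕ, g'^[k] (P' i) ∈ Gset g' neg' P' (i : ℕ)) ∧
          (∀ (κ : ℕ) (j : Fin n) (lam : ℕ),
            (g^[κ] (P i) ∈ Gset g neg P (i : ℕ) ∧
              ∀ k, k < κ → g^[k] (P i) ∉ Gset g neg P (i : ℕ)) →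
            (g^[κ] (P i) ∈ Gset g neg P ((j : ℕ) + 1) ∧
              g^[κ] (P i) ∉ Gset g neg P (j : ℕ)) →
            (g^[lam] (P j) = neg (g^[κ] (P i)) ∧
              ∀ l, l < lam → g^[l] (P j) ≠ neg (g^[κ] (P i))) →
            g'^[κ] (P' i) = neg' (g'^[lam] (P' j))))) :
    Function.Injective P' ∧
    ∀ S : Finset V', (∀ Q : V', ∃ p ∈ S, Q ∈ OrbitBar g' neg' p) → n ≤ S.card :=
  stmt12_general V V' g neg hneg hfiber g' neg' hneg' hfiber' n P hPgen hPmin P' hP'gen hAB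
end
end
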